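/- Let λ > 1 be real and a, b ∈ ℂ, and suppose ψ(u₁, u₂) = (λ u₁ + a, u₂ + b) is a self-map of the Siegel half-plane ℍ² = {(u₁, u₂) ∈ ℂ² : Im u₁ > |u₂|²}. If Im(a) ≥ ((λ − 1)/(ln λ)²)·|b|², then ψ can be embedded into a semigroup of holomorphic self-maps of ℍ² (given explicitly by ψ_t(u₁, u₂) = (λ^t u₁ + ((λ^t − 1)/(λ − 1))·a, u₂ + t b)). -/

import Mathlib

open Set Complex Filter

noncomputable section

/-- `(φ t)_{t ≥ 0}` is a (continuous) semigroup of holomorphic self-maps of `U`. -/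
def IsHolSemigroupOn {E : Type*} [NormedAddCommGroup E] [NormedSpace ℂ E]
    (U : Set E) (φ : ℝ → E → E) : Prop :=
  (∀ t : ℝ, 0 ≤ t → MapsTo (φ t) U U) ∧
  (∀ t : ℝ, 0 ≤ t → DifferentiableOn ℂ (φ t) U) ∧
  (∀ z ∈ U, φ 0 z = z) ∧
  (∀ s : ℝ, 0 ≤ s → ∀ t : ℝ, 0 ≤ t → ∀ z ∈ U, φ (s + t) z = φ s (φ t z)) ∧
  (∀ K : Set E, K ⊆ U → IsCompact K →
    TendstoUniformlyOn (fun t => φ t) id (nhdsWithin 0 (Ioi 0)) K)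

/-- The Siegel half-plane `ℍ² = {(u₁, u₂) : Im u₁ > |u₂|²}`. -/
def Siegel2 : Set (ℂ × ℂ) := {x | ‖x.2‖ ^ 2 < x.1.im}

/-!
The maps `ψ_t` are affine, and `λ^t = e^{tL}` with `L = log λ`, so the semigroup law, holomorphy,
`ψ_0 = id`, `ψ_1 = ψ` and joint continuity in `(t, u)` are immediate; joint continuity gives the
uniform convergence on compacta. The content is that `ψ_t` preserves `ℍ²`. With `c = |b| / L`, the
hypothesis on `Im a` gives `Im (ψ_t u)₁ ≥ e^{tL} Im u₁ + (e^{tL} - 1) c²`, while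
`|(ψ_t u)₂| ≤ |u₂| + tL c`. So it suffices that `(s + x c)² + c² ≤ eˣ (s² + c²)` for `x ≥ 0`:
this is the positive semidefiniteness of a quadratic form in `(s, c)`, and already the cubic
Taylor bound for `eˣ` makes its discriminant nonpositive.
-/

lemma two_mul_mul_mul_le_of_sq_le_mul {p q x : ℝ} (hp : 0 ≤ p) (hq : 0 ≤ q) (hx : x ^ 2 ≤ p * q)
    (s c : ℝ) : 2 * x * s * c ≤ p * s ^ 2 + q * c ^ 2 := by
  rcases hp.eq_or_lt with rfl | hp
  · obtain rfl : x = 0 := by nlinarith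
    nlinarith
  · refine le_of_mul_le_mul_left ?_ hp
    nlinarith [sq_nonneg (p * s - x * c), sq_nonneg c]

lemma add_mul_sq_add_sq_le_exp_mul {x : ℝ} (hx : 0 ≤ x) (s c : ℝ) :
    (s + x * c) ^ 2 + c ^ 2 ≤ Real.exp x * (s ^ 2 + c ^ 2) := by
  set p := x + x ^ 2 / 2 + x ^ 3 / 6 with hp_def
  have hexp : 1 + p ≤ Real.exp x := by
    calc 1 + p = ∑ i ∈ Finset.range 4, x ^ i / i.factorial := by
          simp only [p, Finset.sum_range_succ, Finset.sum_range_zero, Nat.factorial]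
          push_cast
          ring
      _ ≤ Real.exp x := Real.sum_le_exp_of_nonneg hx 4
  have hq : 0 ≤ p - x ^ 2 := by
    have : p - x ^ 2 = x * ((x - 3 / 2) ^ 2 / 6 + 5 / 8) := by rw [hp_def]; ring
    rw [this]; positivity
  have hdisc : x ^ 2 ≤ p * (p - x ^ 2) := by
    have : p * (p - x ^ 2) - x ^ 2 = x ^ 4 / 12 + x ^ 6 / 36 := by rw [hp_def]; ring
    nlinarith [pow_nonneg hx 4, pow_nonneg hx 6]
  have := two_mul_mul_mul_le_of_sq_le_mul (by positivity) hq hdisc s c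
  nlinarith [mul_le_mul_of_nonneg_right hexp (sq_nonneg s),
    mul_le_mul_of_nonneg_right hexp (sq_nonneg c)]

theorem Continuous.tendstoUniformlyOn_of_isCompact {α β γ : Type*} [UniformSpace α]
    [WeaklyLocallyCompactSpace α] [UniformSpace β] [UniformSpace γ] {f : α → β → γ}
    (hf : Continuous ↿f) (x : α) {K : Set β} (hK : IsCompact K) :
    TendstoUniformlyOn f (f x) (nhds x) K := by
  have : CompactSpace K := isCompact_iff_compactSpace.1 hK
  have hfK : Continuous ↿(fun t (y : K) => f t y) :=
    hf.comp (continuous_fst.prodMk (continuous_subtype_val.comp continuous_snd))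
  exact tendstoUniformlyOn_iff_tendstoUniformly_comp_coe.2 (hfK.tendstoUniformly _ x)

def siegelFlow (lam : ℝ) (a b : ℂ) (t : ℝ) (x : ℂ × ℂ) : ℂ × ℂ :=
  (((lam ^ t : ℝ) : ℂ) * x.1 + ((((lam ^ t : ℝ) : ℂ) - 1) / ((lam : ℂ) - 1)) * a,
    x.2 + (t : ℂ) * b)

section siegelFlow

variable {lam : ℝ} {a b : ℂ}

theorem siegelFlow_zero (lam : ℝ) (a b : ℂ) : siegelFlow lam a b 0 = id := by
  ext x <;> simp [siegelFlow]

theorem siegelFlow_one_apply (hlam : lam ≠ 1) (x : ℂ × ℂ) :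
    siegelFlow lam a b 1 x = ((lam : ℂ) * x.1 + a, x.2 + b) := by
  have : (lam : ℂ) - 1 ≠ 0 := sub_ne_zero.2 (mod_cast hlam)
  ext <;> simp [siegelFlow, this]

theorem siegelFlow_add_apply (hlam : 0 < lam) (s t : ℝ) (x : ℂ × ℂ) :
    siegelFlow lam a b (s + t) x = siegelFlow lam a b s (siegelFlow lam a b t x) := by
  simp only [siegelFlow, Real.rpow_add hlam]
  ext <;> push_cast <;> ring

theorem differentiable_siegelFlow (lam : ℝ) (a b : ℂ) (t : ℝ) :
    Differentiable ℂ (siegelFlow lam a b t) := by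
  unfold siegelFlow; fun_prop

theorem continuous_uncurry_siegelFlow (hlam : 0 < lam) : Continuous ↿(siegelFlow lam a b) := by
  have := Real.continuous_const_rpow hlam.ne'
  unfold siegelFlow; fun_prop

theorem siegelFlow_fst_im (lam : ℝ) (a b : ℂ) (t : ℝ) (x : ℂ × ℂ) :
    (siegelFlow lam a b t x).1.im = lam ^ t * x.1.im + (lam ^ t - 1) / (lam - 1) * a.im := by
  have : (((lam ^ t : ℝ) : ℂ) - 1) / ((lam : ℂ) - 1) = (((lam ^ t - 1) / (lam - 1) : ℝ) : ℂ) := by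
    push_cast; rfl
  simp only [siegelFlow, this, add_im, im_ofReal_mul]

theorem mapsTo_siegelFlow_siegel2 (hlam : 1 < lam)
    (ha : (lam - 1) / Real.log lam ^ 2 * ‖b‖ ^ 2 ≤ a.im) {t : ℝ} (ht : 0 ≤ t) :
    MapsTo (siegelFlow lam a b t) Siegel2 Siegel2 := by
  intro x (hx : ‖x.2‖ ^ 2 < x.1.im)
  show ‖x.2 + t * b‖ ^ 2 < (siegelFlow lam a b t x).1.im
  set L := Real.log lam
  have hL : 0 < L := Real.log_pos hlam
  set c := ‖b‖ / L with hc_def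
  have hLc : L * c = ‖b‖ := mul_div_cancel₀ _ hL.ne'
  have hr : lam ^ t = Real.exp (t * L) := by
    rw [Real.rpow_def_of_pos (by linarith), mul_comm]
  have hr1 : 1 ≤ lam ^ t := Real.one_le_rpow hlam.le ht
  have hnorm : ‖x.2 + t * b‖ ≤ ‖x.2‖ + t * L * c := by
    calc ‖x.2 + t * b‖ ≤ ‖x.2‖ + ‖(t : ℂ) * b‖ := norm_add_le _ _
      _ = ‖x.2‖ + t * L * c := by
        rw [norm_mul, norm_real, Real.norm_of_nonneg ht, mul_assoc, hLc]
  have hexp := add_mul_sq_add_sq_le_exp_mul (mul_nonneg ht hL.le) ‖x.2‖ c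
  have hc : (lam ^ t - 1) * c ^ 2 ≤ (lam ^ t - 1) / (lam - 1) * a.im := by
    calc (lam ^ t - 1) * c ^ 2
        = (lam ^ t - 1) / (lam - 1) * ((lam - 1) / L ^ 2 * ‖b‖ ^ 2) := by
          rw [hc_def]; field_simp [show lam - 1 ≠ 0 by linarith]
      _ ≤ (lam ^ t - 1) / (lam - 1) * a.im :=
          mul_le_mul_of_nonneg_left ha (div_nonneg (by linarith) (by linarith))
  rw [siegelFlow_fst_im]
  calc ‖x.2 + t * b‖ ^ 2 ≤ (‖x.2‖ + t * L * c) ^ 2 := by gcongr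
    _ ≤ lam ^ t * ‖x.2‖ ^ 2 + (lam ^ t - 1) * c ^ 2 := by rw [hr]; linarith
    _ < lam ^ t * x.1.im + (lam ^ t - 1) / (lam - 1) * a.im := by
      have := mul_lt_mul_of_pos_left hx (by linarith : 0 < lam ^ t)
      linarith

theorem isHolSemigroupOn_siegelFlow (hlam : 1 < lam)
    (ha : (lam - 1) / Real.log lam ^ 2 * ‖b‖ ^ 2 ≤ a.im) :
    IsHolSemigroupOn Siegel2 (siegelFlow lam a b) := by
  have hlam0 : 0 < lam := by linarith
  refine ⟨fun t ht => mapsTo_siegelFlow_siegel2 hlam ha ht,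
    fun t _ => (differentiable_siegelFlow lam a b t).differentiableOn,
    fun z _ => by rw [siegelFlow_zero]; rfl,
    fun s _ t _ z _ => siegelFlow_add_apply hlam0 s t z, fun K _ hK => ?_⟩
  have h := (continuous_uncurry_siegelFlow (a := a) (b := b) hlam0).tendstoUniformlyOn_of_isCompact
    0 hK
  rw [siegelFlow_zero] at h
  exact fun u hu => nhdsWithin_le_nhds (h u hu)

end siegelFlow

theorem stmt16_general (lam : ℝ) (hlam : 1 < lam) (a b : ℂ)
    (ψ : ℂ × ℂ → ℂ × ℂ) (hψ : ∀ x, ψ x = ((lam : ℂ) * x.1 + a, x.2 + b))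
    (ha : a.im ≥ ((lam - 1) / (Real.log lam) ^ 2) * ‖b‖ ^ 2) :
    ∃ φt : ℝ → ℂ × ℂ → ℂ × ℂ,
      IsHolSemigroupOn Siegel2 φt ∧
      (∀ t : ℝ, 0 ≤ t → ∀ x : ℂ × ℂ,
        φt t x = (((lam ^ t : ℝ) : ℂ) * x.1
            + ((((lam ^ t : ℝ) : ℂ) - 1) / ((lam : ℂ) - 1)) * a,
          x.2 + (t : ℂ) * b)) ∧
      (∀ z ∈ Siegel2, φt 1 z = ψ z) :=
  ⟨siegelFlow lam a b, isHolSemigroupOn_siegelFlow hlam ha, fun _ _ _ => rfl,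
    fun z _ => (siegelFlow_one_apply hlam.ne' z).trans (hψ z).symm⟩

/-- Let `λ > 1` and `ψ(u₁, u₂) = (λ u₁ + a, u₂ + b)` be a self-map of `ℍ²`. If
`Im a ≥ ((λ - 1)/(ln λ)²) |b|²`, then `ψ` embeds into a semigroup of holomorphic
self-maps of `ℍ²`, given explicitly by
`ψ_t(u₁, u₂) = (λ^t u₁ + ((λ^t - 1)/(λ - 1)) a, u₂ + t b)`. -/
theorem stmt16 (lam : ℝ) (hlam : 1 < lam) (a b : ℂ)
    (ψ : ℂ × ℂ → ℂ × ℂ) (hψ : ∀ x, ψ x = ((lam : ℂ) * x.1 + a, x.2 + b))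
    (hself : MapsTo ψ Siegel2 Siegel2)
    (ha : a.im ≥ ((lam - 1) / (Real.log lam) ^ 2) * ‖b‖ ^ 2) :
    ∃ φt : ℝ → ℂ × ℂ → ℂ × ℂ,
      IsHolSemigroupOn Siegel2 φt ∧
      (∀ t : ℝ, 0 ≤ t → ∀ x : ℂ × ℂ,
        φt t x = (((lam ^ t : ℝ) : ℂ) * x.1
            + ((((lam ^ t : ℝ) : ℂ) - 1) / ((lam : ℂ) - 1)) * a,
          x.2 + (t : ℂ) * b)) ∧
      (∀ z ∈ Siegel2, φt 1 z = ψ z) :=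
  stmt16_general lam hlam a b ψ hψ ha
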